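/- Let k ≥ 1 and let v₁, …, v_k ∈ ℝ^m be vectors such that, for each j, the entries of v_j sum to 0 and ‖v_j‖₂ = 1. Then the layer-norm of the concatenated vector ⟨v₁, …, v_k⟩ ∈ ℝ^{km} equals (1/√k) · ⟨v₁, …, v_k⟩. -/

import Mathlib

/-- Layer norm: subtract the mean, then normalize to unit Euclidean norm. -/
noncomputable def layerNorm {ι : Type*} [Fintype ι] (v : EuclideanSpace ℝ ι) :
    EuclideanSpace ℝ ι :=
  let c : EuclideanSpace ℝ ι := WithLp.toLp 2 (fun j => v j - (∑ l, v l) / (Fintype.card ι))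
  ‖c‖⁻¹ • c

theorem layerNorm_of_sum_eq_zero {ι : Type*} [Fintype ι] (v : EuclideanSpace ℝ ι)
    (hv : ∑ i, v i = 0) : layerNorm v = ‖v‖⁻¹ • v := by
  simp [layerNorm, hv]

noncomputable def concat {ι κ : Type*} (v : ι → EuclideanSpace ℝ κ) :
    EuclideanSpace ℝ (ι × κ) :=
  WithLp.toLp 2 fun p => v p.1 p.2

theorem sum_concat {ι κ : Type*} [Fintype ι] [Fintype κ] (v : ι → EuclideanSpace ℝ κ) :
    ∑ p, concat v p = ∑ j, ∑ l, v j l :=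
  Fintype.sum_prod_type _

theorem norm_concat_sq {ι κ : Type*} [Fintype ι] [Fintype κ] (v : ι → EuclideanSpace ℝ κ) :
    ‖concat v‖ ^ 2 = ∑ j, ‖v j‖ ^ 2 := by
  simp only [EuclideanSpace.norm_sq_eq]
  exact Fintype.sum_prod_type _

theorem norm_concat_of_norm_eq_one {ι κ : Type*} [Fintype ι] [Fintype κ]
    (v : ι → EuclideanSpace ℝ κ) (hv : ∀ j, ‖v j‖ = 1) :
    ‖concat v‖ = √(Fintype.card ι) := by
  rw [← Real.sqrt_sq (norm_nonneg _), norm_concat_sq]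
  simp [hv]

theorem layerNorm_concat_general (k m : ℕ)
    (v : Fin k → EuclideanSpace ℝ (Fin m))
    (hsum : ∀ j, ∑ l, v j l = 0) (hnorm : ∀ j, ‖v j‖ = 1) :
    layerNorm (WithLp.toLp 2 (fun p : Fin k × Fin m => v p.1 p.2)) =
      (Real.sqrt k)⁻¹ • (WithLp.toLp 2 (fun p : Fin k × Fin m => v p.1 p.2) : EuclideanSpace ℝ (Fin k × Fin m)) := by
  have hsum' : ∑ p, concat v p = 0 := by simp [sum_concat, hsum]
  have hnorm' : ‖concat v‖ = √k := by simpa using norm_concat_of_norm_eq_one v hnorm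
  calc layerNorm (concat v) = ‖concat v‖⁻¹ • concat v := layerNorm_of_sum_eq_zero _ hsum'
    _ = (√k)⁻¹ • concat v := by rw [hnorm']

/-- If v₁, …, v_k ∈ ℝ^m each have entries summing to 0 and unit Euclidean norm, then the
layer-norm of their concatenation (indexed by Fin k × Fin m, ordered lexicographically,
i.e., ⟨v₁, …, v_k⟩ ∈ ℝ^{km}) equals (1/√k) times the concatenation. -/
theorem layerNorm_concat (k m : ℕ) (hk : 1 ≤ k)
    (v : Fin k → EuclideanSpace ℝ (Fin m))
    (hsum : ∀ j, ∑ l, v j l = 0) (hnorm : ∀ j, ‖v j‖ = 1) :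
    layerNorm (WithLp.toLp 2 (fun p : Fin k × Fin m => v p.1 p.2)) =
      (Real.sqrt k)⁻¹ • (WithLp.toLp 2 (fun p : Fin k × Fin m => v p.1 p.2) : EuclideanSpace ℝ (Fin k × Fin m)) :=
  layerNorm_concat_general k m v hsum hnorm
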